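/- Let X and Y be Tychonoff spaces. For every Radon probability measure μ on X and every Radon probability measure ν on Y, the marginal map χ̂ : P̂(X × Y) → P̂(X) × P̂(Y), λ ↦ (pr₁₊λ, pr₂₊λ), is surjective: there exists a Radon probability measure λ on X × Y with χ̂(λ) = (μ, ν). -/

import Mathlib

open MeasureTheory Set TopologicalSpace
open scoped ENNReal NNReal

/-- Two disjoint compact sets in a product of two T2 spaces can be separated by a set
which is measurable for the product σ-algebra (a finite union of open rectangles). -/
theorem exists_measurable_separating_rect {X Y : Type*} [TopologicalSpace X] [TopologicalSpace Y]
    [MeasurableSpace X] [OpensMeasurableSpace X] [MeasurableSpace Y] [OpensMeasurableSpace Y]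
    [T2Space (X × Y)] {K₁ K₂ : Set (X × Y)} (h₁ : IsCompact K₁) (h₂ : IsCompact K₂)
    (hd : Disjoint K₁ K₂) :
    ∃ R : Set (X × Y), MeasurableSet R ∧ K₁ ⊆ R ∧ Disjoint K₂ R := by
  obtain ⟨U, V, hU, hV, hK₁U, hK₂V, hUV⟩ := SeparatedNhds.of_isCompact_isCompact h₁ h₂ hd
  have hrect : ∀ p ∈ K₁, ∃ a b, IsOpen a ∧ IsOpen b ∧ Prod.fst p ∈ a ∧ Prod.snd p ∈ b ∧
      a ×ˢ b ⊆ U := fun p hp => isOpen_prod_iff.1 hU p.1 p.2 (hK₁U hp)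
  choose a b ha hb hpa hpb hsub using hrect
  obtain ⟨t, ht⟩ := h₁.elim_nhds_subcover' (fun p hp => a p hp ×ˢ b p hp)
    (fun p hp => ((ha p hp).prod (hb p hp)).mem_nhds ⟨hpa p hp, hpb p hp⟩)
  refine ⟨⋃ p ∈ t, a p.1 p.2 ×ˢ b p.1 p.2, ?_, ht, ?_⟩
  · exact t.measurableSet_biUnion fun p _ =>
      ((ha p.1 p.2).measurableSet.prod (hb p.1 p.2).measurableSet)
  · refine (hUV.symm.mono hK₂V ?_)
    exact iUnion₂_subset fun p _ => hsub p.1 p.2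

/-- Let `X` and `Y` be Tychonoff spaces. For every Radon probability
measure `μ` on `X` and every Radon probability measure `ν` on `Y`, there exists a Radon
probability measure `λ` on `X × Y` whose marginals (pushforwards under the coordinate
projections) are `μ` and `ν`; i.e. the marginal map `χ̂` is surjective. -/
theorem marginal_map_surjective
    {X Y : Type*} [TopologicalSpace X] [T35Space X] [TopologicalSpace Y] [T35Space Y]
    [MeasurableSpace X] [BorelSpace X] [MeasurableSpace Y] [BorelSpace Y]
    [MeasurableSpace (X × Y)] [BorelSpace (X × Y)]
    (μ : Measure X) (ν : Measure Y) [IsProbabilityMeasure μ] [IsProbabilityMeasure ν]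
    (hμ : μ.InnerRegular) (hν : ν.InnerRegular) :
    ∃ lam : Measure (X × Y), IsProbabilityMeasure lam ∧ lam.InnerRegular ∧
      lam.map Prod.fst = μ ∧ lam.map Prod.snd = ν := by
  haveI := hμ
  haveI := hν
  -- `π` is the product measure, defined on the *product* σ-algebra, which is in general
  -- smaller than the Borel σ-algebra of `X × Y`.
  let π := μ.prod ν
  -- The content on compact subsets of `X × Y` given by the (outer) product measure.
  let c : Content (X × Y) :=
    { toFun := fun K => (π (K : Set (X × Y))).toNNReal
      mono' := fun K₁ K₂ h => ENNReal.toNNReal_mono (measure_ne_top _ _) (measure_mono h)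
      sup_disjoint' := by
        intro K₁ K₂ hdis _ _
        have key : π (↑K₁ ∪ ↑K₂) = π ↑K₁ + π ↑K₂ := by
          obtain ⟨R, hRm, hK₁R, hR2⟩ := exists_measurable_separating_rect K₁.2 K₂.2 hdis
          refine le_antisymm (measure_union_le _ _) ?_
          calc π ↑K₁ + π ↑K₂
              ≤ π ((↑K₁ ∪ ↑K₂) ∩ R) + π ((↑K₁ ∪ ↑K₂) \ R) :=
                add_le_add (measure_mono (subset_inter subset_union_left hK₁R))
                  (measure_mono (subset_diff.mpr ⟨subset_union_right, hR2⟩))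
            _ = π (↑K₁ ∪ ↑K₂) := measure_inter_add_diff _ hRm
        have : π ↑(K₁ ⊔ K₂) = π ↑K₁ + π ↑K₂ := by
          rw [Compacts.coe_sup]; exact key
        simp only [this, ENNReal.toNNReal_add (measure_ne_top _ _) (measure_ne_top _ _)]
      sup_le' := by
        intro K₁ K₂
        have h1 : π ↑(K₁ ⊔ K₂) ≤ π ↑K₁ + π ↑K₂ := by
          rw [Compacts.coe_sup]; exact measure_union_le _ _
        refine le_trans (ENNReal.toNNReal_mono ?_ h1) ?_
        · exact ENNReal.add_ne_top.2 ⟨measure_ne_top _ _, measure_ne_top _ _⟩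
        · rw [ENNReal.toNNReal_add (measure_ne_top _ _) (measure_ne_top _ _)] }
  -- The Borel measure on `X × Y` induced by this content.
  let lam := c.measure
  haveI : lam.OuterRegular := c.outerRegular
  -- the measure `lam` dominates `π` on compact sets
  have hcK : ∀ {s : Set (X × Y)}, IsCompact s → π s ≤ lam s := by
    intro s hs
    have h1 : c ⟨s, hs⟩ = π s := ENNReal.coe_toNNReal (measure_ne_top _ _)
    calc π s = c ⟨s, hs⟩ := h1.symm
      _ ≤ c.outerMeasure s := c.le_outerMeasure_compacts ⟨s, hs⟩
      _ = lam s := (c.measure_apply hs.isClosed.measurableSet).symm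
  -- the measure of any rectangle is at least the product of the measures
  have hrect : ∀ (A : Set X) (B : Set Y), MeasurableSet A → MeasurableSet B →
      μ A * ν B ≤ lam (A ×ˢ B) := by
    intro A B hA hB
    rw [hA.measure_eq_iSup_isCompact μ, hB.measure_eq_iSup_isCompact ν, ENNReal.iSup_mul]
    refine iSup_le fun K => ?_
    rw [ENNReal.iSup_mul]
    refine iSup_le fun hKA => ?_
    rw [ENNReal.iSup_mul]
    refine iSup_le fun hK => ?_
    rw [ENNReal.mul_iSup]
    refine iSup_le fun L => ?_
    rw [ENNReal.mul_iSup]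
    refine iSup_le fun hLB => ?_
    rw [ENNReal.mul_iSup]
    refine iSup_le fun hL => ?_
    calc μ K * ν L = π (K ×ˢ L) := (Measure.prod_prod K L).symm
      _ ≤ lam (K ×ˢ L) := hcK (hK.prod hL)
      _ ≤ lam (A ×ˢ B) := measure_mono (prod_mono hKA hLB)
  -- `lam` is a probability measure
  have hle1 : lam univ ≤ 1 := by
    rw [c.measure_apply MeasurableSet.univ, c.outerMeasure_of_isOpen univ isOpen_univ]
    refine iSup₂_le fun K _ => ?_
    calc (c K : ℝ≥0∞) = π ↑K := ENNReal.coe_toNNReal (measure_ne_top _ _)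
      _ ≤ π univ := measure_mono (subset_univ _)
      _ = 1 := measure_univ
  haveI hProb : IsProbabilityMeasure lam := by
    constructor
    refine le_antisymm hle1 ?_
    have h := hrect univ univ MeasurableSet.univ MeasurableSet.univ
    simpa [univ_prod_univ] using h
  -- marginals
  have hfst : ∀ (A : Set X), MeasurableSet A → lam (Prod.fst ⁻¹' A) = μ A := by
    intro A hA
    have e1 : A ×ˢ (univ : Set Y) = Prod.fst ⁻¹' A := prod_univ
    have e2 : Aᶜ ×ˢ (univ : Set Y) = Prod.fst ⁻¹' Aᶜ := prod_univ
    have h1 : μ A ≤ lam (A ×ˢ (univ : Set Y)) := by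
      simpa using hrect A univ hA MeasurableSet.univ
    have h2 : μ Aᶜ ≤ lam (Aᶜ ×ˢ (univ : Set Y)) := by
      simpa using hrect Aᶜ univ hA.compl MeasurableSet.univ
    have hm2 : MeasurableSet (Aᶜ ×ˢ (univ : Set Y)) := by
      rw [e2]; exact continuous_fst.measurable hA.compl
    have hdisj : Disjoint (A ×ˢ (univ : Set Y)) (Aᶜ ×ˢ (univ : Set Y)) := by
      rw [e1, e2]; exact disjoint_compl_right.preimage _
    have hu : (A ×ˢ (univ : Set Y)) ∪ (Aᶜ ×ˢ (univ : Set Y)) = univ := by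
      rw [e1, e2, ← preimage_union, union_compl_self, preimage_univ]
    have hadd : lam (A ×ˢ (univ : Set Y)) + lam (Aᶜ ×ˢ (univ : Set Y)) = 1 := by
      rw [← measure_union hdisj hm2, hu, measure_univ]
    have h3 : lam (A ×ˢ (univ : Set Y)) + μ Aᶜ ≤ μ A + μ Aᶜ := by
      have h5 : μ A + μ Aᶜ = 1 := by
        rw [measure_add_measure_compl hA, measure_univ]
      rw [h5, ← hadd]
      exact add_le_add le_rfl h2
    have h4 : lam (A ×ˢ (univ : Set Y)) ≤ μ A :=
      (ENNReal.add_le_add_iff_right (measure_ne_top μ Aᶜ)).mp h3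
    rw [← e1]
    exact le_antisymm h4 h1
  have hsnd : ∀ (B : Set Y), MeasurableSet B → lam (Prod.snd ⁻¹' B) = ν B := by
    intro B hB
    have e1 : (univ : Set X) ×ˢ B = Prod.snd ⁻¹' B := univ_prod
    have e2 : (univ : Set X) ×ˢ Bᶜ = Prod.snd ⁻¹' Bᶜ := univ_prod
    have h1 : ν B ≤ lam ((univ : Set X) ×ˢ B) := by
      simpa using hrect univ B MeasurableSet.univ hB
    have h2 : ν Bᶜ ≤ lam ((univ : Set X) ×ˢ Bᶜ) := by
      simpa using hrect univ Bᶜ MeasurableSet.univ hB.compl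
    have hm2 : MeasurableSet ((univ : Set X) ×ˢ Bᶜ) := by
      rw [e2]; exact continuous_snd.measurable hB.compl
    have hdisj : Disjoint ((univ : Set X) ×ˢ B) ((univ : Set X) ×ˢ Bᶜ) := by
      rw [e1, e2]; exact disjoint_compl_right.preimage _
    have hu : ((univ : Set X) ×ˢ B) ∪ ((univ : Set X) ×ˢ Bᶜ) = univ := by
      rw [e1, e2, ← preimage_union, union_compl_self, preimage_univ]
    have hadd : lam ((univ : Set X) ×ˢ B) + lam ((univ : Set X) ×ˢ Bᶜ) = 1 := by
      rw [← measure_union hdisj hm2, hu, measure_univ]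
    have h3 : lam ((univ : Set X) ×ˢ B) + ν Bᶜ ≤ ν B + ν Bᶜ := by
      have h5 : ν B + ν Bᶜ = 1 := by
        rw [measure_add_measure_compl hB, measure_univ]
      rw [h5, ← hadd]
      exact add_le_add le_rfl h2
    have h4 : lam ((univ : Set X) ×ˢ B) ≤ ν B :=
      (ENNReal.add_le_add_iff_right (measure_ne_top ν Bᶜ)).mp h3
    rw [← e1]
    exact le_antisymm h4 h1
  -- inner regularity
  have hio : lam.InnerRegularWRT IsCompact IsOpen := by
    intro U hU r hr
    rw [c.measure_apply hU.measurableSet, c.outerMeasure_of_isOpen U hU] at hr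
    have hr' : r < ⨆ (K : Compacts (X × Y)) (_ : (K : Set (X × Y)) ⊆ U), (c K : ℝ≥0∞) := hr
    rw [lt_iSup_iff] at hr'
    obtain ⟨K, hK⟩ := hr'
    rw [lt_iSup_iff] at hK
    obtain ⟨hKU, hrK⟩ := hK
    refine ⟨K, hKU, K.2, lt_of_lt_of_le hrK ?_⟩
    calc (c K : ℝ≥0∞) ≤ c.outerMeasure K := c.le_outerMeasure_compacts K
      _ = lam K := (c.measure_apply K.2.isClosed.measurableSet).symm
  have hir : lam.InnerRegular := by
    constructor
    intro s hs r hr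
    exact hio.measurableSet_of_isOpen (fun s U hs hU => hs.diff hU)
      ⟨hs, measure_ne_top lam s⟩ r hr
  refine ⟨lam, hProb, hir, ?_, ?_⟩
  · ext s hs
    rw [Measure.map_apply continuous_fst.measurable hs]
    exact hfst s hs
  · ext s hs
    rw [Measure.map_apply continuous_snd.measurable hs]
    exact hsnd s hs
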